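/- Multi-hop natural matching optimality: let r : Fin P → Fin H → ℝ be rates with each hop sorted decreasingly, i.e., r(p, h) ≥ r(q, h) whenever p ≤ q, for all h. Then for every choice of permutations σ_2, ..., σ_H of Fin P, ∑_p min over h of r(σ_h(p), h) (with σ_1 = identity) is at most ∑_p min over h of r(p, h). -/
import Mathlib


open Finset

theorem multihop_natural_matching_optimal (P H : ℕ) (hH : 0 < H)
    (r : Fin P → Fin H → ℝ)
    (hsorted : ∀ h : Fin H, ∀ p q : Fin P, p ≤ q → r q h ≤ r p h)
    (σ : Fin H → Equiv.Perm (Fin P))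
    (hσ1 : σ ⟨0, hH⟩ = 1) :
    ∑ p : Fin P,
        Finset.univ.inf' ⟨⟨0, hH⟩, Finset.mem_univ _⟩ (fun h : Fin H => r (σ h p) h) ≤
      ∑ p : Fin P,
        Finset.univ.inf' ⟨⟨0, hH⟩, Finset.mem_univ _⟩ (fun h : Fin H => r p h) := by
  have hne : (Finset.univ : Finset (Fin H)).Nonempty := ⟨⟨0, hH⟩, Finset.mem_univ _⟩
  set a : Fin P → ℝ :=
    fun p => Finset.univ.inf' ⟨⟨0, hH⟩, Finset.mem_univ _⟩ (fun h : Fin H => r (σ h p) h)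
    with ha
  set b : Fin P → ℝ :=
    fun p => Finset.univ.inf' ⟨⟨0, hH⟩, Finset.mem_univ _⟩ (fun h : Fin H => r p h) with hb
  obtain ⟨τ, hτ⟩ : ∃ τ : Equiv.Perm (Fin P), Monotone ((fun p => -a p) ∘ τ) :=
    ⟨Tuple.sort (fun p => -a p), Tuple.monotone_sort _⟩
  have hsum : ∑ p, a p = ∑ p, a (τ p) := (Equiv.sum_comp τ a).symm
  rw [hsum]
  apply Finset.sum_le_sum
  intro k _
  obtain ⟨hs, -, hhs⟩ :=
    Finset.exists_mem_eq_inf' hne (fun h : Fin H => r k h)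
  by_contra hcon
  push_neg at hcon
  -- hcon : b k < a (τ k)
  have key : (Finset.Iic k).image τ ⊆ Finset.univ.filter (fun p => σ hs p < k) := by
    intro p hp
    obtain ⟨j, hj, rfl⟩ := Finset.mem_image.mp hp
    have hjk : j ≤ k := Finset.mem_Iic.mp hj
    have hmono : a (τ k) ≤ a (τ j) := by
      have := hτ hjk
      simpa using this
    have hblt : b k < a (τ j) := lt_of_lt_of_le hcon hmono
    refine Finset.mem_filter.mpr ⟨Finset.mem_univ _, ?_⟩
    by_contra hge
    push_neg at hge
    have h1 : a (τ j) ≤ r (σ hs (τ j)) hs :=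
      Finset.inf'_le _ (Finset.mem_univ hs)
    have h2 : r (σ hs (τ j)) hs ≤ r k hs := hsorted hs k _ hge
    have h3 : r k hs = b k := hhs.symm
    exact absurd (h1.trans (h2.trans_eq h3)) (not_le.mpr hblt)
  have hc1 : ((Finset.Iic k).image τ).card = (k : ℕ) + 1 := by
    rw [Finset.card_image_of_injective _ τ.injective, Fin.card_Iic]
  have hsub2 : Finset.univ.filter (fun p => σ hs p < k) ⊆
      (Finset.Iio k).image (σ hs).symm := by
    intro p hp
    have hlt : σ hs p < k := (Finset.mem_filter.mp hp).2
    exact Finset.mem_image.mpr ⟨σ hs p, Finset.mem_Iio.mpr hlt, (σ hs).symm_apply_apply p⟩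
  have hc2 : (Finset.univ.filter (fun p => σ hs p < k)).card ≤ (k : ℕ) := by
    calc (Finset.univ.filter (fun p => σ hs p < k)).card
        ≤ ((Finset.Iio k).image (σ hs).symm).card := Finset.card_le_card hsub2
      _ ≤ (Finset.Iio k).card := Finset.card_image_le
      _ = (k : ℕ) := Fin.card_Iio k
  have := (Finset.card_le_card key).trans hc2
  omega
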